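/- arXiv:2410.03910 — 2 statements merged into one kernel-verified Lean document; each statement's English description precedes it below -/
import Mathlib

section
/- For any persistence diagrams A and B, max{D_∞(A‖B), D_∞(B‖A)} = d_∞(A,B), where D_∞ is the (f,∞)-bottleneck divergence and d_∞ the bottleneck distance. -/
open Multiset
open scoped ENNReal

attribute [local instance] Classical.propDecidable

noncomputable section

/-- A point of an (extended) persistence diagram: finite birth, possibly infinite death. -/
abbrev Pt : Type := ℝ × EReal

/-- A persistence diagram: a finite multiset of points strictly above the diagonal
(the diagonal itself, with infinite multiplicity, is treated implicitly). -/
def IsPD (A : Multiset Pt) : Prop := ∀ a ∈ A, (a.1 : EReal) < a.2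

/-- Sup-norm distance between two diagram points, with the convention that two
infinite death coordinates are at distance zero from each other. -/
def dInfty (a b : Pt) : ℝ≥0∞ :=
  max (ENNReal.ofReal |a.1 - b.1|)
    (if a.2 = ⊤ ∧ b.2 = ⊤ then 0 else (a.2 - b.2).abs)

/-- Sup-norm distance from a point to its diagonal projection
`λ(x,y) = ((x+y)/2,(x+y)/2)`; it is `∞` for points with infinite death. -/
def dDiag (a : Pt) : ℝ≥0∞ :=
  if a.2 = ⊤ then ⊤ else (a.2 - (a.1 : EReal)).abs / 2

/-- A point lying on the diagonal. -/
def isDiag (a : Pt) : Prop := a.2 = (a.1 : EReal)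

/-- `M` encodes an injection from the diagram `A` into the diagram `B` augmented with
all diagonal points: every point of `A` is matched (to an off-diagonal point of `B`,
with multiplicity, or to a diagonal point). -/
def IsInjMatching (A B : Multiset Pt) (M : Multiset (Pt × Pt)) : Prop :=
  M.map Prod.fst = A ∧ (M.map Prod.snd).filter (fun b => ¬ isDiag b) ≤ B

/-- The points of `B` not in the image of the injection encoded by `M`. -/
def unmatched (B : Multiset Pt) (M : Multiset (Pt × Pt)) : Multiset Pt :=
  B - (M.map Prod.snd).filter (fun b => ¬ isDiag b)

/-- The cost of an injection: matched pairs contribute `‖a-γ(a)‖_∞^p`, unmatched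
points of `B` contribute `f(‖b-λ(b)‖_∞)^p`. -/
def injCost (f : ℝ≥0∞ → ℝ≥0∞) (p : ℝ) (B : Multiset Pt) (M : Multiset (Pt × Pt)) : ℝ≥0∞ :=
  (M.map fun q => dInfty q.1 q.2 ^ p).sum +
    ((unmatched B M).map fun b => f (dDiag b) ^ p).sum

/-- The `(f,p)`-Wasserstein divergence `D_p^f(A‖B)`. -/
def WDiv (f : ℝ≥0∞ → ℝ≥0∞) (p : ℝ) (A B : Multiset Pt) : ℝ≥0∞ :=
  (⨅ (M : Multiset (Pt × Pt)) (_ : IsInjMatching A B M), injCost f p B M) ^ (1 / p)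

/-- The `(f,∞)`-bottleneck divergence `D_∞^f(A‖B)`. -/
def WDivInf (f : ℝ≥0∞ → ℝ≥0∞) (A B : Multiset Pt) : ℝ≥0∞ :=
  ⨅ (M : Multiset (Pt × Pt)) (_ : IsInjMatching A B M),
    max ((M.map fun q => dInfty q.1 q.2).sup)
      (((unmatched B M).map fun b => f (dDiag b)).sup)

/-- `M` encodes a bijection between `A` and `B`, both augmented with all diagonal
points: the off-diagonal sources are exactly `A` and the off-diagonal targets are
exactly `B`. -/
def IsBijMatching (A B : Multiset Pt) (M : Multiset (Pt × Pt)) : Prop :=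
  (M.map Prod.fst).filter (fun a => ¬ isDiag a) = A ∧
    (M.map Prod.snd).filter (fun b => ¬ isDiag b) = B

/-- The `p`-Wasserstein distance `d_p(A,B)`. -/
def Wass (p : ℝ) (A B : Multiset Pt) : ℝ≥0∞ :=
  (⨅ (M : Multiset (Pt × Pt)) (_ : IsBijMatching A B M),
    (M.map fun q => dInfty q.1 q.2 ^ p).sum) ^ (1 / p)

/-- The bottleneck distance `d_∞(A,B)`. -/
def WassInf (A B : Multiset Pt) : ℝ≥0∞ :=
  ⨅ (M : Multiset (Pt × Pt)) (_ : IsBijMatching A B M),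
    (M.map fun q => dInfty q.1 q.2).sup

/-- `f` is sub-diagonal: `f x ≤ x`. -/
def SubDiag (f : ℝ≥0∞ → ℝ≥0∞) : Prop := ∀ x, f x ≤ x

/-- `f` is sub-additive: `f (x+y) ≤ f x + f y`. -/
def SubAdd (f : ℝ≥0∞ → ℝ≥0∞) : Prop := ∀ x y, f (x + y) ≤ f x + f y

/-- The projection `π_F` deleting the points with infinite death coordinate. -/
def piF (A : Multiset Pt) : Multiset Pt := A.filter (fun a => a.2 ≠ ⊤)

end

section Aux

lemma ereal_abs_sub_comm (x y : EReal) : (x - y).abs = (y - x).abs := by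
  induction x <;> induction y <;>
    simp [EReal.bot_sub, EReal.sub_top, EReal.coe_sub_bot, EReal.top_sub_coe,
      EReal.top_sub_bot, ← EReal.coe_sub, EReal.abs_def, abs_sub_comm]

lemma dInfty_comm (a b : Pt) : dInfty a b = dInfty b a := by
  unfold dInfty
  rw [abs_sub_comm, ereal_abs_sub_comm]
  exact congrArg _ (if_congr and_comm rfl rfl)

lemma dDiag_le_dInfty {a b : Pt} (hdiag : isDiag a) (hb : (b.1 : EReal) < b.2) :
    dDiag b ≤ dInfty a b := by
  have ha2 : a.2 = (a.1 : EReal) := hdiag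
  have hatop : a.2 ≠ ⊤ := by rw [ha2]; exact EReal.coe_ne_top _
  obtain ⟨b1, b2⟩ := b
  simp only at hb ⊢
  unfold dDiag dInfty
  simp only
  induction b2 with
  | bot => exact absurd hb (not_lt_bot)
  | top =>
      rw [if_pos rfl, if_neg (fun h => hatop h.1)]
      refine le_trans ?_ (le_max_right _ _)
      rw [EReal.sub_top, EReal.abs_bot]
  | coe y =>
      rw [if_neg (EReal.coe_ne_top y), if_neg (fun h => hatop h.1), ha2,
        ← EReal.coe_sub, ← EReal.coe_sub, EReal.abs_def, EReal.abs_def]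
      set m := max (ENNReal.ofReal |a.1 - b1|) (ENNReal.ofReal |a.1 - y|) with hm
      rw [ENNReal.div_le_iff (two_ne_zero) (ENNReal.ofNat_ne_top)]
      calc ENNReal.ofReal |y - b1| ≤ ENNReal.ofReal (|a.1 - y| + |a.1 - b1|) := by
            refine ENNReal.ofReal_le_ofReal ?_
            calc |y - b1| ≤ |y - a.1| + |a.1 - b1| := abs_sub_le y a.1 b1
              _ = |a.1 - y| + |a.1 - b1| := by rw [abs_sub_comm y a.1]
        _ ≤ ENNReal.ofReal |a.1 - y| + ENNReal.ofReal |a.1 - b1| := ENNReal.ofReal_add_le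
        _ ≤ m + m := add_le_add (le_max_right _ _) (le_max_left _ _)
        _ = m * 2 := by rw [mul_two]

lemma key : ∀ (n : ℕ) (A B : Multiset Pt) (M1 M2 : Multiset (Pt × Pt)) (r : ℝ≥0∞),
    Multiset.card A + Multiset.card B ≤ n →
    (∀ a ∈ A, ¬ isDiag a) → (∀ b ∈ B, ¬ isDiag b) →
    M1.map Prod.fst = A → (M1.map Prod.snd).filter (fun b => ¬ isDiag b) ≤ B →
    (∀ q ∈ M1, dInfty q.1 q.2 ≤ r) →
    M2.map Prod.fst = B → (M2.map Prod.snd).filter (fun b => ¬ isDiag b) ≤ A →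
    (∀ q ∈ M2, dInfty q.1 q.2 ≤ r) →
    ∃ M, IsBijMatching A B M ∧ ∀ q ∈ M, dInfty q.1 q.2 ≤ r := by
  intro n
  induction n with
  | zero =>
      intro A B M1 M2 r hcard hA hB h1a h1b h1c h2a h2b h2c
      have hA0 : A = 0 := Multiset.card_eq_zero.mp (by omega)
      have hB0 : B = 0 := Multiset.card_eq_zero.mp (by omega)
      exact ⟨0, ⟨by simp [hA0], by simp [hB0]⟩, by simp⟩
  | succ n ih =>
      intro A B M1 M2 r hcard hA hB h1a h1b h1c h2a h2b h2c
      by_cases hi : B ≤ (M1.map Prod.snd).filter (fun b => ¬ isDiag b)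
      · refine ⟨M1, ⟨?_, le_antisymm h1b hi⟩, h1c⟩
        rw [h1a]
        exact Multiset.filter_eq_self.mpr hA
      by_cases hii : A ≤ (M2.map Prod.snd).filter (fun b => ¬ isDiag b)
      · refine ⟨M2.map Prod.swap, ⟨?_, ?_⟩, ?_⟩
        · have hsw : M2.map (Prod.fst ∘ Prod.swap) = M2.map Prod.snd :=
            Multiset.map_congr rfl fun x _ => rfl
          rw [Multiset.map_map, hsw]
          exact le_antisymm h2b hii
        · have hsw : M2.map (Prod.snd ∘ Prod.swap) = M2.map Prod.fst :=
            Multiset.map_congr rfl fun x _ => rfl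
          rw [Multiset.map_map, hsw, h2a]
          exact Multiset.filter_eq_self.mpr hB
        · intro q hq
          obtain ⟨p, hp, rfl⟩ := Multiset.mem_map.mp hq
          rw [show (Prod.swap p).1 = p.2 from rfl, show (Prod.swap p).2 = p.1 from rfl,
            dInfty_comm]
          exact h2c p hp
      · -- peel a point of `A` which is not needed by `M2`.
        obtain ⟨a, hcnt⟩ : ∃ a,
            ((M2.map Prod.snd).filter (fun b => ¬ isDiag b)).count a < A.count a := by
          by_contra h
          push_neg at h
          exact hii (Multiset.le_iff_count.mpr h)
        have haA : a ∈ A := Multiset.count_pos.mp (lt_of_le_of_lt (Nat.zero_le _) hcnt)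
        have haM1 : a ∈ M1.map Prod.fst := h1a ▸ haA
        obtain ⟨q, hqM1, hq1⟩ := Multiset.mem_map.mp haM1
        have hM1split : q ::ₘ M1.erase q = M1 := Multiset.cons_erase hqM1
        have h1a' : (M1.erase q).map Prod.fst = A.erase a := by
          have h : q.1 ::ₘ (M1.erase q).map Prod.fst = A := by
            rw [← Multiset.map_cons, hM1split, h1a]
          rw [← h, hq1, Multiset.erase_cons_head]
        have hAa : ¬ isDiag a := hA a haA
        have hApos : 0 < Multiset.card A := Multiset.card_pos_iff_exists_mem.mpr ⟨a, haA⟩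
        have hcbA : Multiset.card (A.erase a) = Multiset.card A - 1 := by
          rw [Multiset.card_erase_of_mem haA]; rfl
        have hA' : ∀ x ∈ A.erase a, ¬ isDiag x := fun x hx => hA x (Multiset.mem_of_mem_erase hx)
        have h1c' : ∀ p ∈ M1.erase q, dInfty p.1 p.2 ≤ r :=
          fun p hp => h1c p (Multiset.mem_of_mem_erase hp)
        by_cases hu : isDiag q.2
        · -- the partner of `a` is a diagonal point
          have h2b' : (M2.map Prod.snd).filter (fun b => ¬ isDiag b) ≤ A.erase a := by
            rw [Multiset.le_iff_count]
            intro x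
            rcases eq_or_ne x a with rfl | hx
            · rw [Multiset.count_erase_self]; omega
            · rw [Multiset.count_erase_of_ne hx]
              exact Multiset.le_iff_count.mp h2b x
          obtain ⟨M, hbij, hcost⟩ := ih (A.erase a) B (M1.erase q) M2 r
            (by omega) hA' hB h1a'
            (le_trans (Multiset.filter_le_filter _ (Multiset.map_le_map (Multiset.erase_le _ _))) h1b)
            h1c' h2a h2b' h2c
          refine ⟨q ::ₘ M, ⟨?_, ?_⟩, ?_⟩
          · rw [Multiset.map_cons, Multiset.filter_cons_of_pos (p := fun x => ¬ isDiag x) _ (hq1 ▸ hAa), hbij.1, hq1,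
              Multiset.cons_erase haA]
          · rw [Multiset.map_cons, Multiset.filter_cons_of_neg (p := fun x => ¬ isDiag x) _ (by simpa using hu), hbij.2]
          · intro p hp
            rcases Multiset.mem_cons.mp hp with heq | hp
            · rw [heq]; exact h1c q hqM1
            · exact hcost p hp
        · -- the partner of `a` is an off-diagonal point of `B`
          have huB : q.2 ∈ B :=
            Multiset.mem_of_le h1b
              (Multiset.mem_filter.mpr ⟨Multiset.mem_map_of_mem _ hqM1, hu⟩)
          have huM2 : q.2 ∈ M2.map Prod.fst := h2a ▸ huB
          obtain ⟨p, hpM2, hp1⟩ := Multiset.mem_map.mp huM2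
          have hM2split : p ::ₘ M2.erase p = M2 := Multiset.cons_erase hpM2
          have h2a' : (M2.erase p).map Prod.fst = B.erase q.2 := by
            have h : p.1 ::ₘ (M2.erase p).map Prod.fst = B := by
              rw [← Multiset.map_cons, hM2split, h2a]
            rw [← h, hp1, Multiset.erase_cons_head]
          have hBpos : 0 < Multiset.card B := Multiset.card_pos_iff_exists_mem.mpr ⟨q.2, huB⟩
          have hcbB : Multiset.card (B.erase q.2) = Multiset.card B - 1 := by
            rw [Multiset.card_erase_of_mem huB]; rfl
          have h1b' : ((M1.erase q).map Prod.snd).filter (fun b => ¬ isDiag b) ≤ B.erase q.2 := by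
            have h : q.2 ::ₘ ((M1.erase q).map Prod.snd).filter (fun b => ¬ isDiag b) ≤ B := by
              rw [← Multiset.filter_cons_of_pos (p := fun x => ¬ isDiag x) _ hu, ← Multiset.map_cons, hM1split]
              exact h1b
            rw [Multiset.le_iff_count] at h ⊢
            intro x
            have hx := h x
            rcases eq_or_ne x q.2 with rfl | hne
            · rw [Multiset.count_cons_self] at hx
              rw [Multiset.count_erase_self]
              omega
            · rw [Multiset.count_cons_of_ne hne] at hx
              rw [Multiset.count_erase_of_ne hne]
              exact hx
          have h2b' : ((M2.erase p).map Prod.snd).filter (fun b => ¬ isDiag b) ≤ A.erase a := by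
            have hmono : ((M2.erase p).map Prod.snd).filter (fun b => ¬ isDiag b) ≤
                (M2.map Prod.snd).filter (fun b => ¬ isDiag b) :=
              Multiset.filter_le_filter _ (Multiset.map_le_map (Multiset.erase_le _ _))
            rw [Multiset.le_iff_count]
            intro x
            have hx := Multiset.le_iff_count.mp hmono x
            rcases eq_or_ne x a with rfl | hne
            · rw [Multiset.count_erase_self]; omega
            · rw [Multiset.count_erase_of_ne hne]
              exact le_trans hx (Multiset.le_iff_count.mp h2b x)
          have hB' : ∀ x ∈ B.erase q.2, ¬ isDiag x :=
            fun x hx => hB x (Multiset.mem_of_mem_erase hx)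
          have h2c' : ∀ s ∈ M2.erase p, dInfty s.1 s.2 ≤ r :=
            fun s hs => h2c s (Multiset.mem_of_mem_erase hs)
          obtain ⟨M, hbij, hcost⟩ := ih (A.erase a) (B.erase q.2) (M1.erase q) (M2.erase p) r
            (by omega) hA' hB' h1a' h1b' h1c' h2a' h2b' h2c'
          refine ⟨q ::ₘ M, ⟨?_, ?_⟩, ?_⟩
          · rw [Multiset.map_cons, Multiset.filter_cons_of_pos (p := fun x => ¬ isDiag x) _ (hq1 ▸ hAa), hbij.1, hq1,
              Multiset.cons_erase haA]
          · rw [Multiset.map_cons, Multiset.filter_cons_of_pos (p := fun x => ¬ isDiag x) _ hu, hbij.2,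
              Multiset.cons_erase huB]
          · intro s hs
            rcases Multiset.mem_cons.mp hs with heq | hs
            · rw [heq]; exact h1c q hqM1
            · exact hcost s hs

lemma wdivInf_le_bij (F : ℝ≥0∞ → ℝ≥0∞) (hd : SubDiag F) {A B : Multiset Pt}
    (hB : IsPD B) (M : Multiset (Pt × Pt)) (hM : IsBijMatching A B M) :
    WDivInf F A B ≤ (M.map fun q => dInfty q.1 q.2).sup := by
  set M1 := M.filter (fun q => ¬ isDiag q.1) with hM1def
  have hM1le : M1 ≤ M := Multiset.filter_le _ M
  have h1 : IsInjMatching A B M1 := by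
    constructor
    · have h := hM.1
      rw [Multiset.filter_map] at h
      exact h
    · calc (M1.map Prod.snd).filter (fun b => ¬ isDiag b)
          ≤ (M.map Prod.snd).filter (fun b => ¬ isDiag b) :=
            Multiset.filter_le_filter _ (Multiset.map_le_map hM1le)
        _ = B := hM.2
  refine le_trans (iInf₂_le M1 h1) (max_le ?_ ?_)
  · exact Multiset.sup_le.mpr fun x hx =>
      Multiset.le_sup (Multiset.mem_of_le (Multiset.map_le_map hM1le) hx)
  · have hsplit : M.filter (fun q => isDiag q.1) + M1 = M := by
      rw [hM1def]
      exact Multiset.filter_add_not _ M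
    have hun : unmatched B M1 =
        ((M.filter (fun q => isDiag q.1)).map Prod.snd).filter (fun b => ¬ isDiag b) := by
      unfold unmatched
      conv_lhs => rw [← hM.2, ← hsplit]
      rw [Multiset.map_add, Multiset.filter_add, add_tsub_cancel_right]
    refine Multiset.sup_le.mpr fun x hx => ?_
    obtain ⟨b, hb, rfl⟩ := Multiset.mem_map.mp hx
    have hbB : b ∈ B := Multiset.mem_of_le (Multiset.sub_le_self _ _) hb
    rw [hun] at hb
    obtain ⟨hbmem, -⟩ := Multiset.mem_filter.mp hb
    obtain ⟨q, hq, rfl⟩ := Multiset.mem_map.mp hbmem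
    obtain ⟨hqM, hqdiag⟩ := Multiset.mem_filter.mp hq
    calc F (dDiag q.2) ≤ dDiag q.2 := hd _
      _ ≤ dInfty q.1 q.2 := dDiag_le_dInfty hqdiag (hB _ hbB)
      _ ≤ _ := Multiset.le_sup (Multiset.mem_map_of_mem (fun q : Pt × Pt => dInfty q.1 q.2) hqM)

end Aux

/-- The bottleneck distance is the maximum of the two bottleneck divergences. -/
theorem divInf_max_eq_wassInf (F : ℝ≥0∞ → ℝ≥0∞) (hd : SubDiag F) (ha : SubAdd F)
    (A B : Multiset Pt) (hA : IsPD A) (hB : IsPD B) :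
    max (WDivInf F A B) (WDivInf F B A) = WassInf A B := by
  refine le_antisymm (max_le ?_ ?_) ?_
  · exact le_iInf fun M => le_iInf fun hM => wdivInf_le_bij F hd hB M hM
  · refine le_iInf fun M => le_iInf fun hM => ?_
    have hM' : IsBijMatching B A (M.map Prod.swap) := by
      constructor
      · have hsw : M.map (Prod.fst ∘ Prod.swap) = M.map Prod.snd :=
          Multiset.map_congr rfl fun x _ => rfl
        rw [Multiset.map_map, hsw]
        exact hM.2
      · have hsw : M.map (Prod.snd ∘ Prod.swap) = M.map Prod.fst :=
          Multiset.map_congr rfl fun x _ => rfl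
        rw [Multiset.map_map, hsw]
        exact hM.1
    calc WDivInf F B A ≤ ((M.map Prod.swap).map fun q => dInfty q.1 q.2).sup :=
          wdivInf_le_bij F hd hA _ hM'
      _ = (M.map fun q => dInfty q.1 q.2).sup := by
          rw [Multiset.map_map]
          exact congrArg _ (Multiset.map_congr rfl fun q _ => dInfty_comm q.2 q.1)
  · by_contra hlt
    push_neg at hlt
    obtain ⟨c, hc1, hc2⟩ := exists_between hlt
    have hAB : WDivInf F A B < c := (le_max_left _ _).trans_lt hc1
    have hBA : WDivInf F B A < c := (le_max_right _ _).trans_lt hc1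
    simp only [WDivInf, iInf_lt_iff] at hAB hBA
    obtain ⟨M1, hM1, hABlt⟩ := hAB
    obtain ⟨M2, hM2, hBAlt⟩ := hBA
    have h1c : ∀ q ∈ M1, dInfty q.1 q.2 ≤ c := fun q hq =>
      (Multiset.le_sup (Multiset.mem_map_of_mem _ hq)).trans
        ((le_max_left _ _).trans hABlt.le)
    have h2c : ∀ q ∈ M2, dInfty q.1 q.2 ≤ c := fun q hq =>
      (Multiset.le_sup (Multiset.mem_map_of_mem _ hq)).trans
        ((le_max_left _ _).trans hBAlt.le)
    have hA' : ∀ a ∈ A, ¬ isDiag a := fun a h => (hA a h).ne'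
    have hB' : ∀ b ∈ B, ¬ isDiag b := fun b h => (hB b h).ne'
    obtain ⟨M, hbij, hcost⟩ := key (Multiset.card A + Multiset.card B) A B M1 M2 c le_rfl
      hA' hB' hM1.1 hM1.2 h1c hM2.1 hM2.2 h2c
    have hle : WassInf A B ≤ c := by
      refine iInf₂_le_of_le M hbij ?_
      refine Multiset.sup_le.mpr fun x hx => ?_
      obtain ⟨q, hq, rfl⟩ := Multiset.mem_map.mp hx
      exact hcost q hq
    exact absurd hle (not_le.mpr hc2)
end

section
/- Let D_F be the set of persistence diagrams all of whose off-diagonal points are finite. For any persistence diagram A, the infimum of D(C‖A) over C ∈ D_F is attained uniquely at the diagram B obtained from A by removing all points with an infinite coordinate, and D(B‖A) = (Σ_{a infinite in A} f(∞)^p)^{1/p}. -/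
open Multiset
open scoped ENNReal

attribute [local instance] Classical.propDecidable

/-!
An injection of a diagram `C` with only finite points into `A` either sends a point to an
infinite point of `A`, at infinite cost, or leaves every infinite point of `A` unmatched, at cost
`f(∞)^p` each; the rest is an injection of `C` into `π_F A`. So
`D(C‖A)^p ≥ D(C‖π_F A)^p + #{infinite points of A} f(∞)^p`, with equality for `C = π_F A`
through the identity matching. Uniqueness follows from `D(C‖B) = 0 → C = B` for finite `C`:
every nonzero term of the cost of an injection of `C` into `B` is bounded below by a positive
constant depending only on `C` and `B`, so a cost below that constant forces the identity
matching.
-/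

noncomputable def optCost (f : ℝ≥0∞ → ℝ≥0∞) (p : ℝ) (C B : Multiset Pt) : ℝ≥0∞ :=
  ⨅ (M : Multiset (Pt × Pt)) (_ : IsInjMatching C B M), injCost f p B M

theorem WDiv_eq_optCost_rpow (f : ℝ≥0∞ → ℝ≥0∞) (p : ℝ) (C B : Multiset Pt) :
    WDiv f p C B = optCost f p C B ^ (1 / p) := rfl

theorem Multiset.inf_pos_of_forall_pos {s : Multiset ℝ≥0∞} (h : ∀ x ∈ s, 0 < x) :
    0 < s.inf := by
  induction s using Multiset.induction with
  | empty => simp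
  | cons a s ih => simp_all

section Points

variable {a b d : Pt}

theorem dInfty_self (h : a.2 ≠ ⊥) : dInfty a a = 0 := by
  obtain ⟨x, y⟩ := a
  induction y using EReal.rec <;> simp_all [dInfty]

theorem dInfty_eq_top (ha : a.2 ≠ ⊤) (hb : b.2 = ⊤) : dInfty a b = ⊤ := by
  simp [dInfty, ha, hb, EReal.sub_top]

theorem dInfty_pos (ha : a.2 ≠ ⊤) (ha' : a.2 ≠ ⊥) (hab : a ≠ b) : 0 < dInfty a b := by
  obtain ⟨x, r⟩ := a
  lift r to ℝ using ⟨ha, ha'⟩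
  obtain ⟨y, s⟩ := b
  induction s using EReal.rec with
  | bot => simp [dInfty]
  | top => simp [dInfty_eq_top]
  | coe s =>
    simp only [dInfty, EReal.coe_ne_top, false_and, if_false, ← EReal.coe_sub, EReal.abs_def,
      lt_max_iff, ENNReal.ofReal_pos, abs_pos, sub_ne_zero]
    by_contra! h
    exact hab (by simp_all)

theorem dDiag_pos (h : (a.1 : EReal) < a.2) : 0 < dDiag a := by
  obtain ⟨x, r⟩ := a
  induction r using EReal.rec with
  | bot => simp at h
  | top => simp [dDiag]
  | coe r =>
    simp_all [dDiag, ← EReal.coe_sub, EReal.abs_def, ne_of_gt]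

theorem dDiag_le_dInfty_s13 (ha : a.2 ≠ ⊤) (ha' : a.2 ≠ ⊥) (hd : isDiag d) :
    dDiag a ≤ dInfty a d := by
  obtain ⟨x, r⟩ := a
  lift r to ℝ using ⟨ha, ha'⟩
  obtain ⟨y, _⟩ := d
  obtain rfl : _ = (y : EReal) := hd
  simp only [dDiag, dInfty, EReal.coe_ne_top, if_false, false_and, ← EReal.coe_sub, EReal.abs_def]
  rw [ENNReal.div_le_iff two_ne_zero ENNReal.ofNat_ne_top, ← ENNReal.ofReal_max,
    ← ENNReal.ofReal_ofNat 2, ← ENNReal.ofReal_mul (le_max_of_le_left (abs_nonneg _))]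
  refine ENNReal.ofReal_le_ofReal ?_
  have := abs_sub_le r y x
  rw [abs_sub_comm y x] at this
  linarith [le_max_left |x - y| |r - y|, le_max_right |x - y| |r - y|]

end Points

section Costs

variable {f : ℝ≥0∞ → ℝ≥0∞} {p : ℝ} {A B C : Multiset Pt} {M : Multiset (Pt × Pt)}

theorem dInfty_rpow_le_injCost {q : Pt × Pt} (hq : q ∈ M) :
    dInfty q.1 q.2 ^ p ≤ injCost f p B M :=
  (le_sum_of_mem (mem_map_of_mem (fun q : Pt × Pt => dInfty q.1 q.2 ^ p) hq)).trans le_self_add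

theorem rpow_dDiag_le_injCost {b : Pt} (hb : b ∈ unmatched B M) :
    f (dDiag b) ^ p ≤ injCost f p B M :=
  (le_sum_of_mem (mem_map_of_mem (fun b => f (dDiag b) ^ p) hb)).trans le_add_self

theorem injCost_eq_top (hp : 0 < p) {q : Pt × Pt} (hq : q ∈ M) (h₁ : q.1.2 ≠ ⊤)
    (h₂ : q.2.2 = ⊤) : injCost f p B M = ⊤ :=
  top_le_iff.mp <| by
    simpa [dInfty_eq_top h₁ h₂, ENNReal.top_rpow_of_pos hp] using
      dInfty_rpow_le_injCost (f := f) (p := p) (B := B) hq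

theorem isInjMatching_map_diag_self (B : Multiset Pt) :
    IsInjMatching B B (B.map fun b => (b, b)) :=
  ⟨by simp [map_map], by simp [map_map]⟩

theorem IsInjMatching.mono (hM : IsInjMatching C B M) (hBA : B ≤ A) : IsInjMatching C A M :=
  ⟨hM.1, hM.2.trans hBA⟩

theorem injCost_map_diag_self (hB : IsPD B) (hp : 0 < p) :
    injCost f p B (B.map fun b => (b, b)) = 0 := by
  have hnd : B.filter (fun b => ¬ isDiag b) = B :=
    filter_eq_self.mpr fun b hb hdiag => (hB b hb).ne' hdiag
  have hself : ∀ b ∈ B, dInfty b b ^ p = 0 := fun b hb => by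
    rw [dInfty_self (hB b hb).ne_bot, ENNReal.zero_rpow_of_pos hp]
  simp only [injCost, unmatched, map_map, Function.comp_apply, map_id', hnd, tsub_self,
    Multiset.map_zero, sum_zero, add_zero]
  exact sum_eq_zero fun x hx => by
    obtain ⟨b, hb, rfl⟩ := mem_map.mp hx
    exact hself b hb

theorem optCost_self (hB : IsPD B) (hp : 0 < p) : optCost f p B B = 0 :=
  nonpos_iff_eq_zero.mp <|
    (iInf₂_le _ (isInjMatching_map_diag_self B)).trans (injCost_map_diag_self hB hp).le

theorem IsPD.piF {A : Multiset Pt} (hA : IsPD A) : IsPD (piF A) :=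
  fun a ha => hA a (mem_of_mem_filter ha)

theorem IsInjMatching.piF (hM : IsInjMatching C A M) (hfin : ∀ q ∈ M, q.2.2 ≠ ⊤) :
    IsInjMatching C (piF A) M := by
  refine ⟨hM.1, le_filter.mpr ⟨hM.2, fun b hb => ?_⟩⟩
  obtain ⟨q, hq, rfl⟩ := mem_map.mp (mem_of_mem_filter hb)
  exact hfin q hq

theorem injCost_eq_injCost_piF_add (hM : IsInjMatching C (piF A) M) :
    injCost f p A M = injCost f p (piF A) M + (A.filter fun a => a.2 = ⊤).card • f ⊤ ^ p := by
  have hsplit : unmatched A M = A.filter (fun a => a.2 = ⊤) + unmatched (piF A) M := by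
    rw [unmatched, unmatched, ← add_tsub_assoc_of_le hM.2, piF, filter_add_not]
  have hinf : ((A.filter fun a => a.2 = ⊤).map fun a => f (dDiag a) ^ p).sum =
      (A.filter fun a => a.2 = ⊤).card • f ⊤ ^ p := by
    rw [← sum_replicate, ← map_const']
    exact congrArg sum <| map_congr rfl fun a ha => by simp [dDiag, (mem_filter.mp ha).2]
  rw [injCost, injCost, hsplit, map_add, sum_add, hinf]
  ring

theorem optCost_piF_add_le (hp : 0 < p) (hC : ∀ c ∈ C, c.2 ≠ ⊤) :
    optCost f p C (piF A) + (A.filter fun a => a.2 = ⊤).card • f ⊤ ^ p ≤ optCost f p C A := by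
  refine le_iInf₂ fun M hM => ?_
  by_cases hfin : ∀ q ∈ M, q.2.2 ≠ ⊤
  · rw [injCost_eq_injCost_piF_add (hM.piF hfin)]
    gcongr
    exact iInf₂_le M (hM.piF hfin)
  · push Not at hfin
    obtain ⟨q, hq, hq₂⟩ := hfin
    rw [injCost_eq_top hp hq (hC _ (hM.1 ▸ mem_map_of_mem _ hq)) hq₂]
    exact le_top

theorem optCost_piF (hA : IsPD A) (hp : 0 < p) :
    optCost f p (piF A) A = (A.filter fun a => a.2 = ⊤).card • f ⊤ ^ p := by
  have hP := hA.piF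
  have hM := isInjMatching_map_diag_self (piF A)
  refine le_antisymm ?_ ?_
  · refine (iInf₂_le _ (hM.mono (filter_le _ A))).trans_eq ?_
    rw [injCost_eq_injCost_piF_add hM, injCost_map_diag_self hP hp, zero_add]
  · simpa [optCost_self hP hp] using
      optCost_piF_add_le (f := f) (A := A) (C := piF A) hp fun c hc => (mem_filter.mp hc).2

end Costs

section Rigidity

variable {f : ℝ≥0∞ → ℝ≥0∞} {p : ℝ} {B C : Multiset Pt} {M : Multiset (Pt × Pt)}

/-- Every nonzero term of the cost of an injection of a finite `C` into `B` is at least this;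
a pair `(c, d)` with `d` on the diagonal costs at least `dDiag c ^ p`. -/
noncomputable def matchingGap (f : ℝ≥0∞ → ℝ≥0∞) (p : ℝ) (C B : Multiset Pt) : ℝ≥0∞ :=
  (B.map (fun b => f (dDiag b) ^ p) + C.map (fun c => dDiag c ^ p) +
    ((C ×ˢ B).filter fun q => q.1 ≠ q.2).map fun q => dInfty q.1 q.2 ^ p).inf

theorem matchingGap_pos (hf : ∀ x, 0 < x → 0 < f x) (hp : 0 < p) (hB : IsPD B) (hC : IsPD C)
    (hCfin : ∀ c ∈ C, c.2 ≠ ⊤) : 0 < matchingGap f p C B := by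
  refine inf_pos_of_forall_pos fun x hx => ?_
  simp only [mem_add, mem_map, mem_filter, mem_product] at hx
  rcases hx with (⟨b, hb, rfl⟩ | ⟨c, hc, rfl⟩) | ⟨q, ⟨⟨hq₁, -⟩, hne⟩, rfl⟩
  · exact ENNReal.rpow_pos_of_nonneg (hf _ (dDiag_pos (hB b hb))) hp.le
  · exact ENNReal.rpow_pos_of_nonneg (dDiag_pos (hC c hc)) hp.le
  · exact ENNReal.rpow_pos_of_nonneg (dInfty_pos (hCfin _ hq₁) (hC _ hq₁).ne_bot hne) hp.le

theorem eq_of_injCost_lt_matchingGap (hp : 0 < p) (hC : IsPD C) (hCfin : ∀ c ∈ C, c.2 ≠ ⊤)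
    (hM : IsInjMatching C B M) (hlt : injCost f p B M < matchingGap f p C B) : C = B := by
  have hsrc : ∀ q ∈ M, q.1 ∈ C := fun q hq => hM.1 ▸ mem_map_of_mem _ hq
  have hoff : ∀ q ∈ M, ¬ isDiag q.2 := fun q hq hdiag => by
    have hgap : matchingGap f p C B ≤ dDiag q.1 ^ p :=
      inf_le (mem_add.mpr (.inl (mem_add.mpr (.inr (mem_map_of_mem _ (hsrc q hq))))))
    refine (hgap.trans ?_).not_gt hlt
    exact (ENNReal.rpow_le_rpow (dDiag_le_dInfty_s13 (hCfin _ (hsrc q hq))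
      (hC _ (hsrc q hq)).ne_bot hdiag) hp.le).trans (dInfty_rpow_le_injCost hq)
  have htargets : (M.map Prod.snd).filter (fun b => ¬ isDiag b) = M.map Prod.snd :=
    filter_eq_self.mpr fun b hb => by
      obtain ⟨q, hq, rfl⟩ := mem_map.mp hb
      exact hoff q hq
  have hid : ∀ q ∈ M, q.1 = q.2 := fun q hq => by
    by_contra hne
    have hqB : q.2 ∈ B := mem_of_le hM.2 (by rw [htargets]; exact mem_map_of_mem _ hq)
    have hgap : matchingGap f p C B ≤ dInfty q.1 q.2 ^ p :=
      inf_le (mem_add.mpr (.inr (mem_map_of_mem _ (mem_filter.mpr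
        ⟨mem_product.mpr ⟨hsrc q hq, hqB⟩, hne⟩))))
    exact (hgap.trans (dInfty_rpow_le_injCost hq)).not_gt hlt
  have hCM : M.map Prod.snd = C := (map_congr rfl hid).symm.trans hM.1
  have hall : unmatched B M = 0 := eq_zero_of_forall_notMem fun b hb => by
    have hbB : b ∈ B := mem_of_le tsub_le_self hb
    have hgap : matchingGap f p C B ≤ f (dDiag b) ^ p :=
      inf_le (mem_add.mpr (.inl (mem_add.mpr (.inl (mem_map_of_mem _ hbB)))))
    exact (hgap.trans (rpow_dDiag_le_injCost hb)).not_gt hlt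
  have hCB := hM.2
  rw [htargets, hCM] at hCB
  rw [unmatched, htargets, hCM, tsub_eq_zero_iff_le] at hall
  exact le_antisymm hCB hall

theorem eq_of_optCost_eq_zero (hf : ∀ x, 0 < x → 0 < f x) (hp : 0 < p) (hB : IsPD B)
    (hC : IsPD C) (hCfin : ∀ c ∈ C, c.2 ≠ ⊤) (h : optCost f p C B = 0) : C = B := by
  have hgap := matchingGap_pos hf hp hB hC hCfin
  rw [← h, optCost] at hgap
  obtain ⟨M, hM⟩ := iInf_lt_iff.mp hgap
  obtain ⟨hMC, hlt⟩ := iInf_lt_iff.mp hM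
  exact eq_of_injCost_lt_matchingGap hp hC hCfin hMC hlt

end Rigidity

theorem projection_minimizes_wdiv_general (F : ℝ≥0∞ → ℝ≥0∞)
    (hpos : ∀ x : ℝ≥0∞, 0 < x → 0 < F x) (htop : F ⊤ ≠ ⊤)
    (p : ℝ) (hp : 1 ≤ p) (A : Multiset Pt) (hA : IsPD A) :
    (∀ C : Multiset Pt, IsPD C → (∀ c ∈ C, c.2 ≠ ⊤) →
        WDiv F p (piF A) A ≤ WDiv F p C A) ∧
    (∀ C : Multiset Pt, IsPD C → (∀ c ∈ C, c.2 ≠ ⊤) →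
        WDiv F p C A = WDiv F p (piF A) A → C = piF A) ∧
    WDiv F p (piF A) A =
      ((A.filter (fun a => a.2 = ⊤)).card • (F ⊤ ^ p)) ^ (1 / p) := by
  have hp0 : 0 < p := zero_lt_one.trans_le hp
  set c := (A.filter fun a => a.2 = ⊤).card • F ⊤ ^ p with hc_def
  have hval : optCost F p (piF A) A = c := optCost_piF hA hp0
  have hc : c ≠ ⊤ := by
    rw [hc_def, nsmul_eq_mul]
    exact ENNReal.mul_ne_top (ENNReal.natCast_ne_top _) (ENNReal.rpow_ne_top_of_nonneg hp0.le htop)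
  refine ⟨fun C _ hCfin => ?_, fun C hC hCfin heq => ?_, by rw [WDiv_eq_optCost_rpow, hval]⟩
  · rw [WDiv_eq_optCost_rpow, WDiv_eq_optCost_rpow, hval]
    exact ENNReal.rpow_le_rpow (le_add_self.trans (optCost_piF_add_le hp0 hCfin)) (by positivity)
  · rw [WDiv_eq_optCost_rpow, WDiv_eq_optCost_rpow, hval] at heq
    have hCA : optCost F p C A = c := ENNReal.rpow_left_injective (one_div_ne_zero hp0.ne') heq
    refine eq_of_optCost_eq_zero hpos hp0 hA.piF hC hCfin ?_
    refine nonpos_iff_eq_zero.mp (ENNReal.le_of_add_le_add_right hc ?_)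
    simpa only [zero_add, hCA] using optCost_piF_add_le (f := F) (A := A) hp0 hCfin

/-- Among diagrams with only finite points, `D(-‖A)` is uniquely minimized by
the diagram obtained from `A` by deleting its infinite points, and the minimal
value is `(Σ_{a infinite in A} f(∞)^p)^{1/p}`. -/
theorem projection_minimizes_wdiv (F : ℝ≥0∞ → ℝ≥0∞) (hc : Continuous F)
    (hd : SubDiag F) (ha : SubAdd F)
    (hpos : ∀ x : ℝ≥0∞, 0 < x → 0 < F x) (htop : F ⊤ ≠ ⊤)
    (p : ℝ) (hp : 1 ≤ p) (A : Multiset Pt) (hA : IsPD A) :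
    (∀ C : Multiset Pt, IsPD C → (∀ c ∈ C, c.2 ≠ ⊤) →
        WDiv F p (piF A) A ≤ WDiv F p C A) ∧
    (∀ C : Multiset Pt, IsPD C → (∀ c ∈ C, c.2 ≠ ⊤) →
        WDiv F p C A = WDiv F p (piF A) A → C = piF A) ∧
    WDiv F p (piF A) A =
      ((A.filter (fun a => a.2 = ⊤)).card • (F ⊤ ^ p)) ^ (1 / p) :=
  projection_minimizes_wdiv_general F hpos htop p hp A hA
end
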